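/- PlanOverWindow correctness: in a deterministic MDP with effective planning window W, the algorithm that, at each timestep i, enumerates all A^W action sequences of length W from the current state, computes the exact W-step cumulative reward of each (via one episode per sequence), and commits to the first action of the maximizing sequence, returns an optimal policy deterministically, using exactly T²·A^W environment timesteps. -/

import Mathlib

/-!
Q-value iteration started from `Q¹ = R` unrolls to an exhaustive search: `Q^W_t(s, a)` is the
maximum, over continuations of `a` by `W - 1` further actions, of the reward collected from `s`
before the horizon. So the lookahead value the algorithm maximises at step `i` is `Q^W_{i+1}`
of its first action, and every action it commits to is greedy for `Q^W` along its own
trajectory. Completing these choices off the trajectory by arbitrary `Q^W`-greedy ones gives a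
policy in `Π(Q^W)` that replays the algorithm's actions, which is optimal by the definition of
the effective planning window.
-/

open Finset Classical

/-- Total reward of playing a list of actions from state `s` in a deterministic MDP. -/
def seqReturn {S : Type*} (A : ℕ) (f : S → Fin A → S) (R : S → Fin A → ℝ) :
    S → List (Fin A) → ℝ
  | _, [] => 0
  | s, a :: rest => R s a + seqReturn A f R (f s a) rest

/-- State reached after playing a list of actions from `s`. -/
def stateAfter {S : Type*} (A : ℕ) (f : S → Fin A → S) : S → List (Fin A) → S
  | s, [] => s
  | s, a :: rest => stateAfter A f (f s a) rest

/-- Q-value-iteration iterates: `qIter ... Q1 0 = Q1`, `qIter ... Q1 (j+1) = QVI (qIter ... Q1 j)`,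
where `QVI(Q)_t(s,a) = R(s,a) + max_{a'} Q_{t+1}(f(s,a), a')` (and `Q_{T+1} ≡ 0`). -/
noncomputable def qIter {S : Type*} (A T : ℕ) (f : S → Fin A → S) (R : S → Fin A → ℝ)
    (Q1 : ℕ → S → Fin A → ℝ) : ℕ → ℕ → S → Fin A → ℝ
  | 0 => Q1
  | j + 1 => fun t s a =>
      R s a + if t < T then ⨆ a' : Fin A, qIter A T f R Q1 j (t + 1) (f s a) a' else 0

/-- Trajectory of a deterministic policy: `polState ... t` is the state at timestep `t+1`. -/
def polState {S : Type*} (A : ℕ) (f : S → Fin A → S) (p : ℕ → S → Fin A) (s1 : S) : ℕ → S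
  | 0 => s1
  | t + 1 => f (polState A f p s1 t) (p (t + 1) (polState A f p s1 t))

theorem ciSup_ciSup_fin_cons {α β : Type*} [Finite α] [ConditionallyCompleteLattice β] {n : ℕ}
    (g : (Fin (n + 1) → α) → β) :
    ⨆ a, ⨆ c : Fin n → α, g (Fin.cons a c) = ⨆ c, g c := by
  rw [← Finite.ciSup_prod fun x : α × (Fin n → α) => g (Fin.cons x.1 x.2)]
  exact (Fin.consEquiv fun _ => α).iSup_comp

theorem ciSup_fin_cons_le_of_forall_le {α β : Type*} [Finite α] [ConditionallyCompleteLattice β]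
    {n : ℕ} (g : (Fin (n + 1) → α) → β) {x : Fin (n + 1) → α} (hx : ∀ y, g y ≤ g x) (a : α) :
    ⨆ c : Fin n → α, g (Fin.cons a c) ≤ ⨆ c : Fin n → α, g (Fin.cons (x 0) c) := by
  have : Nonempty α := ⟨a⟩
  have : Nonempty β := ⟨g x⟩
  refine ciSup_le fun c => (hx _).trans ?_
  conv_lhs => rw [← Fin.cons_self_tail x]
  exact le_ciSup (f := fun c => g (Fin.cons (x 0) c)) (Finite.bddAbove_range _) (Fin.tail x)

section

variable {S : Type*} {A : ℕ} (f : S → Fin A → S) (R : S → Fin A → ℝ)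

theorem seqReturn_take_succ_ofFn_cons (s : S) {n : ℕ} (a : Fin A) (c : Fin n → Fin A) (k : ℕ) :
    seqReturn A f R s ((List.ofFn (Fin.cons a c)).take (k + 1))
      = R s a + seqReturn A f R (f s a) ((List.ofFn c).take k) := by
  simp only [List.ofFn_succ, Fin.cons_zero, Fin.cons_succ, List.take_succ_cons, seqReturn]

theorem stateAfter_take_succ (s : S) (l : List (Fin A)) {k : ℕ} (hk : k < l.length) :
    stateAfter A f s (l.take (k + 1)) = f (stateAfter A f s (l.take k)) l[k] := by
  rw [← List.take_concat_get' l k hk]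
  induction l.take k generalizing s with
  | nil => rfl
  | cons b l ih => exact ih (f s b)

-- `T + 1 - t` is the number of timesteps left from `t`, so `take` cuts the lookahead at the horizon.
theorem qIter_eq_iSup {T : ℕ} (j : ℕ) {t : ℕ} (ht : t ≤ T) (s : S) (a : Fin A) :
    qIter A T f R (fun _ => R) j t s a
      = ⨆ c : Fin j → Fin A, seqReturn A f R s ((List.ofFn (Fin.cons a c)).take (T + 1 - t)) := by
  have : Nonempty (Fin A) := ⟨a⟩
  rw [Nat.sub_add_comm ht]
  simp only [seqReturn_take_succ_ofFn_cons]
  induction j generalizing t s a with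
  | zero => simp [qIter, seqReturn]
  | succ j ih =>
    rcases ht.lt_or_eq with htT | rfl
    · have hbdd := Finite.bddAbove_range fun c : Fin (j + 1) → Fin A =>
        seqReturn A f R (f s a) ((List.ofFn c).take (T - t))
      calc qIter A T f R (fun _ => R) (j + 1) t s a
          = R s a + ⨆ a', qIter A T f R (fun _ => R) j (t + 1) (f s a) a' := by
            simp only [qIter, if_pos htT]
        _ = R s a + ⨆ a', ⨆ c : Fin j → Fin A,
              seqReturn A f R (f s a) ((List.ofFn (Fin.cons a' c)).take (T - t)) := by
            rw [show T - t = T - (t + 1) + 1 by omega]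
            simp only [ih htT, seqReturn_take_succ_ofFn_cons]
        _ = R s a + ⨆ c : Fin (j + 1) → Fin A,
              seqReturn A f R (f s a) ((List.ofFn c).take (T - t)) := by
            rw [ciSup_ciSup_fin_cons fun c => seqReturn A f R (f s a) ((List.ofFn c).take (T - t))]
        _ = _ := (OrderIso.addLeft (R s a)).map_ciSup hbdd
    · simp [qIter, seqReturn]

theorem qIter_le_qIter_head_of_forall_le {T W i : ℕ} (hi : i < T) (s : S)
    {seq : Fin (W + 1) → Fin A}
    (hseq : ∀ seq' : Fin (W + 1) → Fin A,
      seqReturn A f R s ((List.ofFn seq').take (T - i))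
        ≤ seqReturn A f R s ((List.ofFn seq).take (T - i)))
    (a : Fin A) :
    qIter A T f R (fun _ => R) W (i + 1) s a ≤ qIter A T f R (fun _ => R) W (i + 1) s (seq 0) := by
  rw [qIter_eq_iSup f R W hi, qIter_eq_iSup f R W hi, Nat.add_sub_add_right]
  exact ciSup_fin_cons_le_of_forall_le
    (fun c => seqReturn A f R s ((List.ofFn c).take (T - i))) hseq a

theorem polState_eq_stateAfter_take {T : ℕ} (p : ℕ → S → Fin A) (s1 : S) (acts : Fin T → Fin A)
    (hp : ∀ i : Fin T, p (i + 1) (stateAfter A f s1 ((List.ofFn acts).take i)) = acts i) :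
    ∀ k ≤ T, polState A f p s1 k = stateAfter A f s1 ((List.ofFn acts).take k)
  | 0, _ => rfl
  | k + 1, hk => by
    rw [polState, polState_eq_stateAfter_take p s1 acts hp k (by omega), hp ⟨k, hk⟩,
      stateAfter_take_succ f s1 _ (by simpa using hk), List.getElem_ofFn]

theorem ofFn_policy_actions_eq {T : ℕ} (p : ℕ → S → Fin A) (s1 : S) (acts : Fin T → Fin A)
    (hp : ∀ i : Fin T, p (i + 1) (stateAfter A f s1 ((List.ofFn acts).take i)) = acts i) :
    List.ofFn (fun i : Fin T => p (i + 1) (polState A f p s1 i)) = List.ofFn acts := by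
  congr 1
  funext i
  rw [polState_eq_stateAfter_take f p s1 acts hp i i.isLt.le, hp]

end

theorem exists_greedy_policy_extending {S α β : Type*} [Finite α] [Nonempty α] [LinearOrder β]
    (Q : ℕ → S → α → β) {T : ℕ} (st : ℕ → S) (acts : Fin T → α)
    (hacts : ∀ (i : Fin T) a, Q (i + 1) (st i) a ≤ Q (i + 1) (st i) (acts i)) :
    ∃ p : ℕ → S → α,
      (∀ t s a, Q t s a ≤ Q t s (p t s)) ∧ ∀ i : Fin T, p (i + 1) (st i) = acts i := by
  choose g hg using fun t s => Finite.exists_max (Q t s)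
  refine ⟨fun t s => match t with
    | 0 => g 0 s
    | k + 1 => if h : k < T ∧ s = st k then acts ⟨k, h.1⟩ else g (k + 1) s, ?_, ?_⟩
  · rintro (_ | k) s a
    · exact hg 0 s a
    · dsimp only
      split_ifs with h
      · obtain ⟨hk, rfl⟩ := h
        exact hacts ⟨k, hk⟩ a
      · exact hg _ s a
  · intro i
    simp [i.isLt]

theorem planOverWindow_correct_general
    {S : Type*} (A T W : ℕ) (hApos : 0 < A) (hW : 1 ≤ W)
    (f : S → Fin A → S) (R : S → Fin A → ℝ) (s1 : S)
    -- the MDP has effective planning window W: every Q^W-greedy policy is optimal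
    (hEPW : ∀ p : ℕ → S → Fin A,
      (∀ t s a, 1 ≤ t → t ≤ T →
          qIter A T f R (fun _ s' a' => R s' a') (W - 1) t s a
            ≤ qIter A T f R (fun _ s' a' => R s' a') (W - 1) t s (p t s)) →
      ∀ acts' : Fin T → Fin A,
        seqReturn A f R s1 (List.ofFn acts')
          ≤ seqReturn A f R s1
              (List.ofFn (fun i : Fin T => p (i + 1) (polState A f p s1 i)))) :
    -- any trajectory produced by W-step lookahead greedy choices is optimal
    ∀ acts : Fin T → Fin A,
      (∀ i : Fin T, ∃ seq : Fin W → Fin A,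
        acts i = seq ⟨0, hW⟩ ∧
        ∀ seq' : Fin W → Fin A,
          seqReturn A f R (stateAfter A f s1 ((List.ofFn acts).take i))
              ((List.ofFn seq').take (T - i))
            ≤ seqReturn A f R (stateAfter A f s1 ((List.ofFn acts).take i))
              ((List.ofFn seq).take (T - i))) →
      ∀ acts' : Fin T → Fin A,
        seqReturn A f R s1 (List.ofFn acts') ≤ seqReturn A f R s1 (List.ofFn acts) := by
  intro acts hacts acts'
  obtain ⟨V, rfl⟩ := Nat.exists_eq_add_of_le' hW
  have : Nonempty (Fin A) := ⟨⟨0, hApos⟩⟩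
  have hgreedy : ∀ (i : Fin T) a,
      qIter A T f R (fun _ => R) V (i + 1) (stateAfter A f s1 ((List.ofFn acts).take i)) a
        ≤ qIter A T f R (fun _ => R) V (i + 1) (stateAfter A f s1 ((List.ofFn acts).take i))
          (acts i) := by
    intro i a
    obtain ⟨seq, hfirst, hseq⟩ := hacts i
    rw [hfirst]
    exact qIter_le_qIter_head_of_forall_le f R i.isLt _ hseq a
  obtain ⟨p, hp_greedy, hp_acts⟩ := exists_greedy_policy_extending _
    (fun k => stateAfter A f s1 ((List.ofFn acts).take k)) acts hgreedy
  have := hEPW p (fun t s a _ _ => hp_greedy t s a) acts'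
  rwa [ofFn_policy_actions_eq f p s1 acts hp_acts] at this

/--
PlanOverWindow correctness.  Suppose the deterministic MDP has effective
planning window `W` in the sense that every policy greedy with respect to `Q^W`
(where `Q^1_t(s,a) = R(s,a)`, `Q^{j+1} = QVI(Q^j)`) generates an optimal action sequence
from the start state.  Then the algorithm that, at each timestep `i`, enumerates all
length-`W` action sequences from the current state (truncated at the horizon), computes
the exact `W`-step cumulative reward of each, and commits to the first action of a
maximizing sequence, produces an optimal action sequence.  (The algorithm uses exactly
`T` iterations × `A^W` sequences × `T`-step episodes `= T²·A^W` environment timesteps.)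
-/
theorem planOverWindow_correct
    {S : Type*} (A T W : ℕ) (hApos : 0 < A) (hW : 1 ≤ W) (hWT : W ≤ T)
    (f : S → Fin A → S) (R : S → Fin A → ℝ) (s1 : S)
    -- the MDP has effective planning window W: every Q^W-greedy policy is optimal
    (hEPW : ∀ p : ℕ → S → Fin A,
      (∀ t s a, 1 ≤ t → t ≤ T →
          qIter A T f R (fun _ s' a' => R s' a') (W - 1) t s a
            ≤ qIter A T f R (fun _ s' a' => R s' a') (W - 1) t s (p t s)) →
      ∀ acts' : Fin T → Fin A,
        seqReturn A f R s1 (List.ofFn acts')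
          ≤ seqReturn A f R s1
              (List.ofFn (fun i : Fin T => p (i + 1) (polState A f p s1 i)))) :
    -- any trajectory produced by W-step lookahead greedy choices is optimal
    ∀ acts : Fin T → Fin A,
      (∀ i : Fin T, ∃ seq : Fin W → Fin A,
        acts i = seq ⟨0, hW⟩ ∧
        ∀ seq' : Fin W → Fin A,
          seqReturn A f R (stateAfter A f s1 ((List.ofFn acts).take i))
              ((List.ofFn seq').take (T - i))
            ≤ seqReturn A f R (stateAfter A f s1 ((List.ofFn acts).take i))
              ((List.ofFn seq).take (T - i))) →
      ∀ acts' : Fin T → Fin A,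
        seqReturn A f R s1 (List.ofFn acts') ≤ seqReturn A f R s1 (List.ofFn acts) :=
  planOverWindow_correct_general A T W hApos hW f R s1 hEPW
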